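/- Let u = so(3) ⊕ so(n+1) (n ≥ 3) with an Ad-invariant inner product making the elementary skew matrices E_{ab} orthonormal in each factor, k = so(2) ⊕ so(n) embedded in the lower-right blocks, p its orthogonal complement, and a = span{H₂, H₁} where H₂ = (E_{12}, 0) and H₁ = (0, E_{12}). Suppose v₁ ∈ a and v₂ ∈ p are unit vectors such that [v₁, v₂] lies in the center c(k) = so(2) ⊕ {0} of k. Then ‖[v₁, v₂]‖² ≤ 1, with equality if and only if v₁ = ±H₂ and v₂ = ±(E_{13}, 0). -/

import Mathlib

/-! The bracket lies in the centre `so(2) ⊕ 0`, so its norm is the square of its coefficient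
on `(E₂₃, 0)`. In the `so(3)` factor `[x E₁₂, x' E₁₂ + y' E₁₃] = -x y' E₂₃` (`Eskew 0 1` is
`E₁₂`: indices are 0-based), hence `‖[v₁, v₂]‖² = x² y'²`, and both factors are at most `1`
because `v₁` and `v₂` are unit vectors. Equality forces `x² = y'² = 1`, which kills every
other coordinate of `v₁` and `v₂`. -/

open Matrix

/-- The elementary skew-symmetric matrix `E_{ab}` with `+1` in entry `(a,b)` and `-1`
in entry `(b,a)`. -/
noncomputable def Eskew {k : ℕ} (a b : Fin k) : Matrix (Fin k) (Fin k) ℝ :=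
  Matrix.single a b 1 - Matrix.single b a 1

/-- The inner product on `so(3) ⊕ so(n+1)` for which the elementary skew matrices are
orthonormal in each factor. -/
noncomputable def ipn (n : ℕ)
    (X Y : Matrix (Fin 3) (Fin 3) ℝ × Matrix (Fin (n + 1)) (Fin (n + 1)) ℝ) : ℝ :=
  (1 / 2) * ((X.1ᵀ * Y.1).trace + (X.2ᵀ * Y.2).trace)

/-- The componentwise matrix commutator on `so(3) ⊕ so(n+1)`. -/
def brktn (n : ℕ)
    (X Y : Matrix (Fin 3) (Fin 3) ℝ × Matrix (Fin (n + 1)) (Fin (n + 1)) ℝ) :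
    Matrix (Fin 3) (Fin 3) ℝ × Matrix (Fin (n + 1)) (Fin (n + 1)) ℝ :=
  (X.1 * Y.1 - Y.1 * X.1, X.2 * Y.2 - Y.2 * X.2)

lemma mul_eq_one_iff_of_le_one {R : Type*} [Semiring R] [LinearOrder R] [IsStrictOrderedRing R]
    {a b : R} (ha₀ : 0 ≤ a) (ha : a ≤ 1) (hb : b ≤ 1) : a * b = 1 ↔ a = 1 ∧ b = 1 := by
  refine ⟨fun h => ?_, fun ⟨ha₁, hb₁⟩ => by rw [ha₁, hb₁, one_mul]⟩
  have ha₁ : a = 1 := le_antisymm ha (h ▸ by simpa using mul_le_mul_of_nonneg_left hb ha₀)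
  exact ⟨ha₁, by simpa [ha₁] using h⟩

section Eskew

variable {k : ℕ}

lemma Eskew_mul_Eskew_sub_Eskew_mul_Eskew {a b c : Fin k} (hab : a ≠ b) (hac : a ≠ c)
    (hbc : b ≠ c) :
    Eskew a b * Eskew a c - Eskew a c * Eskew a b = -Eskew b c := by
  simp only [Eskew, sub_mul, mul_sub, single_mul_single_same, one_mul,
    single_mul_single_of_ne _ _ _ _ hab.symm, single_mul_single_of_ne _ _ _ _ hac.symm,
    single_mul_single_of_ne _ _ _ _ hab, single_mul_single_of_ne _ _ _ _ hac,
    single_mul_single_of_ne _ _ _ _ hbc, single_mul_single_of_ne _ _ _ _ hbc.symm]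
  abel

lemma commutator_smul_Eskew_add_smul_Eskew {a b c : Fin k} (hab : a ≠ b) (hac : a ≠ c)
    (hbc : b ≠ c) (x x' y' : ℝ) :
    x • Eskew a b * (x' • Eskew a b + y' • Eskew a c)
      - (x' • Eskew a b + y' • Eskew a c) * (x • Eskew a b) = -(x * y') • Eskew b c :=
  calc _ = (x * y') • (Eskew a b * Eskew a c - Eskew a c * Eskew a b) := by
        simp only [mul_add, add_mul, smul_mul_smul_comm]
        module
    _ = _ := by rw [Eskew_mul_Eskew_sub_Eskew_mul_Eskew hab hac hbc, smul_neg, neg_smul]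

lemma smul_Eskew_apply {a b : Fin k} (hab : a ≠ b) (c : ℝ) : (c • Eskew a b) a b = c := by
  simp [Eskew, hab]

lemma trace_transpose_Eskew_mul_Eskew {a b : Fin k} (hab : a ≠ b) :
    ((Eskew a b)ᵀ * Eskew a b).trace = 2 := by
  simp only [Eskew, transpose_sub, transpose_single, sub_mul, mul_sub, single_mul_single_same,
    single_mul_single_of_ne _ _ _ _ hab, single_mul_single_of_ne _ _ _ _ hab.symm, trace_sub,
    trace_single_eq_same, one_mul]
  norm_num

end Eskew

lemma ipn_smul_Eskew_self (n : ℕ) {a b : Fin 3} (hab : a ≠ b) (c : ℝ) :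
    ipn n (c • Eskew a b, 0) (c • Eskew a b, 0) = c ^ 2 := by
  simp only [ipn, transpose_smul, smul_mul_smul_comm, trace_smul,
    trace_transpose_Eskew_mul_Eskew hab, mul_zero, trace_zero, smul_eq_mul]
  ring

lemma brktn_fst_apply_one_two {n : ℕ} (x y x' y' : ℝ)
    (Y : Matrix (Fin (n + 1)) (Fin (n + 1)) ℝ) :
    (brktn n (x • Eskew 0 1, y • Eskew 0 1) (x' • Eskew 0 1 + y' • Eskew 0 2, Y)).1 1 2
      = -(x * y') := by
  simp only [brktn]
  rw [commutator_smul_Eskew_add_smul_Eskew (by decide) (by decide) (by decide),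
    smul_Eskew_apply (by decide)]

lemma eq_Eskew_or_eq_neg_Eskew_iff_of_eq_smul {n : ℕ} {x y : ℝ}
    {v : Matrix (Fin 3) (Fin 3) ℝ × Matrix (Fin (n + 1)) (Fin (n + 1)) ℝ}
    (hv : v = (x • Eskew 0 1, y • Eskew 0 1)) (hxy : x ^ 2 + y ^ 2 = 1) :
    (v = (Eskew 0 1, 0) ∨ v = (-Eskew 0 1, 0)) ↔ x ^ 2 = 1 := by
  subst hv
  constructor
  · intro h
    refine sq_eq_one_iff.2 ?_
    rcases h with h | h <;> [left; right] <;> simpa [Eskew] using congrArg (fun v => v.1 0 1) h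
  · intro hx
    have hy : y = 0 := by nlinarith
    rcases sq_eq_one_iff.mp hx with rfl | rfl <;> simp [hy]

lemma eq_Eskew_or_eq_neg_Eskew_iff_of_eq_add_sum {n : ℕ} {x' y' : ℝ} {X : Fin n → ℝ}
    {v : Matrix (Fin 3) (Fin 3) ℝ × Matrix (Fin (n + 1)) (Fin (n + 1)) ℝ}
    (hv : v = (x' • Eskew 0 1 + y' • Eskew 0 2, ∑ j, X j • Eskew 0 j.succ))
    (hunit : x' ^ 2 + y' ^ 2 + ∑ j, X j ^ 2 = 1) :
    (v = (Eskew 0 2, 0) ∨ v = (-Eskew 0 2, 0)) ↔ y' ^ 2 = 1 := by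
  subst hv
  constructor
  · intro h
    refine sq_eq_one_iff.2 ?_
    rcases h with h | h <;> [left; right] <;> simpa [Eskew] using congrArg (fun v => v.1 0 2) h
  · intro hy'
    have hS : ∑ j, X j ^ 2 = 0 := by
      nlinarith [sq_nonneg x', Finset.sum_nonneg fun j (_ : j ∈ Finset.univ) => sq_nonneg (X j)]
    have hx' : x' = 0 := by nlinarith
    have hX : ∀ j, X j = 0 := fun j => by
      simpa using (Finset.sum_eq_zero_iff_of_nonneg fun j _ => sq_nonneg (X j)).mp hS j
        (Finset.mem_univ j)
    rcases sq_eq_one_iff.mp hy' with rfl | rfl <;> simp [hx', hX]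

theorem stmt6_general (n : ℕ) (x y x' y' : ℝ) (X : Fin n → ℝ)
    (hv₁unit : x ^ 2 + y ^ 2 = 1)
    (hv₂unit : x' ^ 2 + y' ^ 2 + ∑ j : Fin n, (X j) ^ 2 = 1)
    (v₁ v₂ : Matrix (Fin 3) (Fin 3) ℝ × Matrix (Fin (n + 1)) (Fin (n + 1)) ℝ)
    (hv₁def : v₁ = (x • Eskew 0 1, y • Eskew 0 1))
    (hv₂def : v₂ = (x' • Eskew 0 1 + y' • Eskew 0 2,
      ∑ j : Fin n, X j • Eskew (0 : Fin (n + 1)) j.succ))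
    (hcenter : ∃ c : ℝ, brktn n v₁ v₂ = (c • Eskew 1 2, 0)) :
    ipn n (brktn n v₁ v₂) (brktn n v₁ v₂) ≤ 1 ∧
    (ipn n (brktn n v₁ v₂) (brktn n v₁ v₂) = 1 ↔
      (v₁ = (Eskew 0 1, 0) ∨ v₁ = (-(Eskew 0 1), 0)) ∧
      (v₂ = (Eskew 0 2, 0) ∨ v₂ = (-(Eskew 0 2), 0))) := by
  obtain ⟨c, hc⟩ := hcenter
  have hc_eq : c = -(x * y') := by
    have h := congrArg (fun v => v.1 1 2) hc
    simp only [hv₁def, hv₂def, brktn_fst_apply_one_two,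
      smul_Eskew_apply (show (1 : Fin 3) ≠ 2 by decide)] at h
    exact h.symm
  have hS : 0 ≤ ∑ j, X j ^ 2 := Finset.sum_nonneg fun j _ => sq_nonneg (X j)
  have hx : x ^ 2 ≤ 1 := by nlinarith
  have hy' : y' ^ 2 ≤ 1 := by nlinarith
  rw [hc, ipn_smul_Eskew_self n (by decide), hc_eq, neg_sq, mul_pow,
    eq_Eskew_or_eq_neg_Eskew_iff_of_eq_smul hv₁def hv₁unit,
    eq_Eskew_or_eq_neg_Eskew_iff_of_eq_add_sum hv₂def hv₂unit]
  exact ⟨mul_le_one₀ hx (sq_nonneg y') hy', mul_eq_one_iff_of_le_one (sq_nonneg x) hx hy'⟩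

/-- for the symmetric pair `(SO(3)×SO(n+1), SO(2)×SO(n))` with `n ≥ 3`,
if `v₁ = x•H₂ + y•H₁ ∈ a` (with `H₂ = (E₁₂,0)`, `H₁ = (0,E₁₂)`) and `v₂ ∈ p` are unit
vectors with `[v₁,v₂]` in the center `c(k) = so(2) ⊕ {0}` (spanned by `(E₂₃,0)`), then
`‖[v₁,v₂]‖² ≤ 1` with equality iff `v₁ = ±H₂` and `v₂ = ±(E₁₃,0)`. -/
theorem stmt6 (n : ℕ) (hn : 3 ≤ n) (x y x' y' : ℝ) (X : Fin n → ℝ)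
    (hv₁unit : x ^ 2 + y ^ 2 = 1)
    (hv₂unit : x' ^ 2 + y' ^ 2 + ∑ j : Fin n, (X j) ^ 2 = 1)
    (v₁ v₂ : Matrix (Fin 3) (Fin 3) ℝ × Matrix (Fin (n + 1)) (Fin (n + 1)) ℝ)
    (hv₁def : v₁ = (x • Eskew 0 1, y • Eskew 0 1))
    (hv₂def : v₂ = (x' • Eskew 0 1 + y' • Eskew 0 2,
      ∑ j : Fin n, X j • Eskew (0 : Fin (n + 1)) j.succ))
    (hcenter : ∃ c : ℝ, brktn n v₁ v₂ = (c • Eskew 1 2, 0)) :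
    ipn n (brktn n v₁ v₂) (brktn n v₁ v₂) ≤ 1 ∧
    (ipn n (brktn n v₁ v₂) (brktn n v₁ v₂) = 1 ↔
      (v₁ = (Eskew 0 1, 0) ∨ v₁ = (-(Eskew 0 1), 0)) ∧
      (v₂ = (Eskew 0 2, 0) ∨ v₂ = (-(Eskew 0 2), 0))) :=
  stmt6_general n x y x' y' X hv₁unit hv₂unit v₁ v₂ hv₁def hv₂def hcenter
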